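/- Let (L, [·,·], α, β) be a regular BiHom-Lie algebra. The direct sum Der(L) = ⊕_{k,l} Der_{α^k β^l}(L) of all α^k β^l-derivations, equipped with the commutator bracket [D, D'] = D∘D' − D'∘D, is a Lie algebra. -/

import Mathlib

/-!
If `D` is an `αᵏβˡ`-derivation and `D'` an `αᵏ'βˡ'`-derivation, both commuting with `α` and `β`,
then expanding `D D' [u, v] - D' D [u, v]` the mixed terms cancel, because `D` commutes with the
twist of `D'` and vice versa, and what remains says that `[D, D']` is an `αᵏ⁺ᵏ'βˡ⁺ˡ'`-derivation
(the twists compose this way since `α` and `β` commute). So the union of all `Der_{αᵏβˡ}(L)` is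
closed under the commutator, and by bilinearity so is its span.
-/

attribute [local instance] LieRing.ofAssociativeRing

theorem Commute.map_zpow_right {G M : Type*} [Group G] [Monoid M] (f : G →* M) {a : M} {g : G}
    (h : Commute a (f g)) (k : ℤ) : Commute a (f (g ^ k)) := by
  have := h.units_zpow_right (u := f.toHomUnits g) k
  rwa [← map_zpow, MonoidHom.coe_toHomUnits] at this

theorem Submodule.lie_mem_span_of_forall_lie_mem {R A : Type*} [CommRing R] [LieRing A]
    [LieAlgebra R A] {s : Set A} (hs : ∀ x ∈ s, ∀ y ∈ s, ⁅x, y⁆ ∈ span R s) {x y : A}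
    (hx : x ∈ span R s) (hy : y ∈ span R s) : ⁅x, y⁆ ∈ span R s := by
  induction hx, hy using span_induction₂ with
  | mem_mem x y hx hy => exact hs x hx y hy
  | zero_left y hy => simp
  | zero_right x hx => simp
  | add_left x y z _ _ _ hx hy => simpa only [add_lie] using add_mem hx hy
  | add_right x y z _ _ _ hx hy => simpa only [lie_add] using add_mem hx hy
  | smul_left r x y _ _ h => simpa only [smul_lie] using smul_mem _ r h
  | smul_right r x y _ _ h => simpa only [lie_smul] using smul_mem _ r h

section

variable {K L : Type*} [CommRing K] [AddCommGroup L] [Module K L]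

def IsTwistedDerivation (br : L →ₗ[K] L →ₗ[K] L) (γ D : Module.End K L) : Prop :=
  ∀ v w, D (br v w) = br (D v) (γ w) + br (γ v) (D w)

theorem IsTwistedDerivation.lie {br : L →ₗ[K] L →ₗ[K] L} {γ γ' D D' : Module.End K L}
    (hD : IsTwistedDerivation br γ D) (hD' : IsTwistedDerivation br γ' D')
    (hDγ' : Commute D γ') (hD'γ : Commute D' γ) (hγ : Commute γ γ') :
    IsTwistedDerivation br (γ * γ') ⁅D, D'⁆ := by
  unfold IsTwistedDerivation at *
  intro v w
  have hDγ'_apply : ∀ u, D (γ' u) = γ' (D u) := LinearMap.congr_fun hDγ'.eq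
  have hD'γ_apply : ∀ u, D' (γ u) = γ (D' u) := LinearMap.congr_fun hD'γ.eq
  have hγ_apply : ∀ u, γ' (γ u) = γ (γ' u) := LinearMap.congr_fun hγ.eq.symm
  simp only [Ring.lie_def, LinearMap.sub_apply, Module.End.mul_apply, hD, hD', map_add,
    map_sub, hDγ'_apply, hD'γ_apply, hγ_apply]
  abel

/-- `Der_{αᵏβˡ}(L)`. -/
def biHomDerivations (br : L →ₗ[K] L →ₗ[K] L) (α β : L ≃ₗ[K] L) (k l : ℤ) :
    Set (Module.End K L) :=
  {D | Commute D α ∧ Commute D β ∧ IsTwistedDerivation br ↑(α ^ k * β ^ l) D}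

theorem commute_coe_zpow_mul_zpow {D : Module.End K L} {α β : L ≃ₗ[K] L}
    (hα : Commute D α) (hβ : Commute D β) (k l : ℤ) : Commute D ↑(α ^ k * β ^ l) := by
  let φ := LinearEquiv.automorphismGroup.toLinearMapMonoidHom (R := K) (M := L)
  change Commute D (φ (α ^ k * β ^ l))
  rw [map_mul]
  exact (hα.map_zpow_right φ k).mul_right (hβ.map_zpow_right φ l)

theorem lie_mem_biHomDerivations {br : L →ₗ[K] L →ₗ[K] L} {α β : L ≃ₗ[K] L}
    (hαβ : Commute α β) {k l k' l' : ℤ} {D D' : Module.End K L}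
    (hD : D ∈ biHomDerivations br α β k l) (hD' : D' ∈ biHomDerivations br α β k' l') :
    ⁅D, D'⁆ ∈ biHomDerivations br α β (k + k') (l + l') := by
  obtain ⟨hDα, hDβ, hDder⟩ := hD
  obtain ⟨hD'α, hD'β, hD'der⟩ := hD'
  have hlie : ∀ {γ : Module.End K L}, Commute D γ → Commute D' γ → Commute ⁅D, D'⁆ γ :=
    fun h h' ↦ by
      rw [Ring.lie_def]
      exact (h.mul_left h').sub_left (h'.mul_left h)
  have hγ : α ^ k * β ^ l * (α ^ k' * β ^ l') = α ^ (k + k') * β ^ (l + l') := by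
    rw [(hαβ.symm.zpow_zpow l k').mul_mul_mul_comm, zpow_add, zpow_add]
  have hγγ' : Commute (α ^ k * β ^ l) (α ^ k' * β ^ l') :=
    ((Commute.zpow_zpow_self α k k').mul_left (hαβ.zpow_zpow k' l).symm).mul_right
      ((hαβ.zpow_zpow k l').mul_left (Commute.zpow_zpow_self β l l'))
  refine ⟨hlie hDα hD'α, hlie hDβ hD'β, ?_⟩
  rw [← hγ, LinearEquiv.coe_toLinearMap_mul]
  exact hDder.lie hD'der (commute_coe_zpow_mul_zpow hDα hDβ k' l')
    (commute_coe_zpow_mul_zpow hD'α hD'β k l)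
    (hγγ'.map LinearEquiv.automorphismGroup.toLinearMapMonoidHom)

end

theorem stmt_7_general {K : Type*} [Field K] {L : Type*} [AddCommGroup L] [Module K L]
    (br : L →ₗ[K] L →ₗ[K] L) (α β : L ≃ₗ[K] L)
    (hcomm : ∀ a, α (β a) = β (α a))
    (Der : ℤ → ℤ → Set (Module.End K L))
    (hDer : ∀ k l, Der k l = {D : Module.End K L |
      (∀ v, D (α v) = α (D v)) ∧ (∀ v, D (β v) = β (D v)) ∧
      (∀ v w, D (br v w) = br (D v) ((α ^ k * β ^ l) w) + br ((α ^ k * β ^ l) v) (D w))})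
    (S : Submodule K (Module.End K L))
    (hS : S = Submodule.span K (⋃ k : ℤ, ⋃ l : ℤ, Der k l)) :
    ∀ D ∈ S, ∀ D' ∈ S, D * D' - D' * D ∈ S := by
  have hDer_eq : Der = biHomDerivations br α β := by
    ext k l D
    rw [hDer]
    simp only [biHomDerivations, IsTwistedDerivation, Commute, SemiconjBy, LinearMap.ext_iff,
      Module.End.mul_apply, LinearEquiv.coe_coe, Set.mem_ofPred_eq]
  subst hS hDer_eq
  intro D hD D' hD'
  rw [← Ring.lie_def]
  refine Submodule.lie_mem_span_of_forall_lie_mem (fun D hD D' hD' ↦ ?_) hD hD'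
  obtain ⟨k, l, hD⟩ := Set.mem_iUnion₂.1 hD
  obtain ⟨k', l', hD'⟩ := Set.mem_iUnion₂.1 hD'
  exact Submodule.subset_span <| Set.mem_iUnion₂.2
    ⟨k + k', l + l', lie_mem_biHomDerivations (LinearEquiv.ext hcomm) hD hD'⟩

/-- `Der(L) = ⊕_{k,l} Der_{αᵏβˡ}(L)`, with the commutator bracket, is a Lie
algebra (i.e. the span of all the `αᵏβˡ`-derivations is closed under the commutator, and hence
a Lie subalgebra of `End(L)`). -/
theorem stmt_7 {K : Type*} [Field K] {L : Type*} [AddCommGroup L] [Module K L]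
    (br : L →ₗ[K] L →ₗ[K] L) (α β : L ≃ₗ[K] L)
    (hcomm : ∀ a, α (β a) = β (α a))
    (hαm : ∀ a b, α (br a b) = br (α a) (α b))
    (hβm : ∀ a b, β (br a b) = br (β a) (β b))
    (hskew : ∀ a a', br (β a) (α a') = - br (β a') (α a))
    (hjac : ∀ a a' a'', br (β (β a)) (br (β a') (α a''))
      + br (β (β a')) (br (β a'') (α a))
      + br (β (β a'')) (br (β a) (α a')) = 0)
    (Der : ℤ → ℤ → Set (Module.End K L))
    (hDer : ∀ k l, Der k l = {D : Module.End K L |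
      (∀ v, D (α v) = α (D v)) ∧ (∀ v, D (β v) = β (D v)) ∧
      (∀ v w, D (br v w) = br (D v) ((α ^ k * β ^ l) w) + br ((α ^ k * β ^ l) v) (D w))})
    (S : Submodule K (Module.End K L))
    (hS : S = Submodule.span K (⋃ k : ℤ, ⋃ l : ℤ, Der k l)) :
    ∀ D ∈ S, ∀ D' ∈ S, D * D' - D' * D ∈ S :=
  stmt_7_general br α β hcomm Der hDer S hS
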